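/- Consider the graph ℕ with 2^{2^n} parallel edges between n and n+1 for each n ≥ 0. The simple random walk started at 0 has positive probability of moving forward at every step (X_i = i for all i ≤ n); consequently P_0(τ_n = n | τ_n ≥ n) is bounded below by a positive constant independent of n, so the non-concentration bound for return times fails for general hitting times. -/
import Mathlib


open scoped BigOperators

namespace RW

attribute [local instance] Classical.propDecidable

/-- Transition probabilities of the random walk on `ℕ` with `2^{2^n}` parallel edges
between `n` and `n+1`. -/
noncomputable def stepP : ℕ → ℕ → ℝ := fun n m =>
  if n = 0 then (if m = 1 then 1 else 0)
  else if m = n + 1 then (2 ^ 2 ^ n : ℝ) / (2 ^ 2 ^ n + 2 ^ 2 ^ (n - 1))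
  else if m = n - 1 then (2 ^ 2 ^ (n - 1) : ℝ) / (2 ^ 2 ^ n + 2 ^ 2 ^ (n - 1))
  else 0

/-- Probability of a given trajectory of this chain. -/
noncomputable def chainPathProb {t : ℕ} (p : Fin (t + 1) → ℕ) : ℝ :=
  ∏ i : Fin t, stepP (p i.castSucc) (p i.succ)

/-- `chainHitProb u v t` is `P_u(τ_v = t)` for this chain. -/
noncomputable def chainHitProb (u v : ℕ) (t : ℕ) : ℝ :=
  ∑' p : Fin (t + 1) → ℕ,
    if p 0 = u ∧ p (Fin.last t) = v ∧
        (∀ i : Fin (t + 1), i ≠ 0 → i ≠ Fin.last t → p i ≠ v)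
    then chainPathProb p else 0

lemma stepP_nonneg (a b : ℕ) : 0 ≤ stepP a b := by
  unfold stepP
  split_ifs <;> positivity

lemma stepP_le_succ {a b : ℕ} (h : stepP a b ≠ 0) : b ≤ a + 1 := by
  unfold stepP at h
  split_ifs at h with h0 h1 h2 h3 <;> first | omega | exact absurd rfl h

lemma path_le {t : ℕ} (p : Fin (t + 1) → ℕ) (h0 : p 0 = 0)
    (hp : chainPathProb p ≠ 0) : ∀ i : Fin (t + 1), p i ≤ (i : ℕ) := by
  have hfac : ∀ i : Fin t, stepP (p i.castSucc) (p i.succ) ≠ 0 := by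
    intro i hi
    exact hp (Finset.prod_eq_zero (Finset.mem_univ i) hi)
  have key : ∀ k (hk : k < t + 1), p ⟨k, hk⟩ ≤ k := by
    intro k
    induction k with
    | zero => intro hk; simpa using h0.le
    | succ k ih =>
      intro hk
      have hkt : k < t := by omega
      have h1 := stepP_le_succ (hfac ⟨k, hkt⟩)
      have h2 : (⟨k, hkt⟩ : Fin t).castSucc = ⟨k, by omega⟩ := rfl
      have h3 : (⟨k, hkt⟩ : Fin t).succ = ⟨k + 1, hk⟩ := rfl
      rw [h2, h3] at h1
      have := ih (by omega)
      omega
  intro i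
  have := key i.val i.isLt
  simpa using this

lemma chainHitProb_lt {n s : ℕ} (hs : s < n) : chainHitProb 0 n s = 0 := by
  unfold chainHitProb
  have : ∀ p : Fin (s + 1) → ℕ,
      (if p 0 = 0 ∧ p (Fin.last s) = n ∧
        (∀ i : Fin (s + 1), i ≠ 0 → i ≠ Fin.last s → p i ≠ n)
      then chainPathProb p else 0) = 0 := by
    intro p
    split_ifs with h
    · obtain ⟨h0, hl, _⟩ := h
      by_contra hne
      have := path_le p h0 hne (Fin.last s)
      rw [hl] at this
      simp [Fin.last] at this
      omega
    · rfl
  rw [tsum_congr this, tsum_zero]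

lemma chainHitProb_diag (n : ℕ) (hn : 1 ≤ n) :
    chainHitProb 0 n n = ∏ i ∈ Finset.range n, stepP i (i + 1) := by
  unfold chainHitProb
  rw [tsum_eq_single (fun i : Fin (n + 1) => (i : ℕ))]
  · rw [if_pos]
    · unfold chainPathProb
      simp only [Fin.coe_castSucc, Fin.val_succ]
      exact Fin.prod_univ_eq_prod_range (fun k => stepP k (k + 1)) n
    · refine ⟨rfl, rfl, ?_⟩
      intro i _ hil
      show (i : ℕ) ≠ n
      exact (Fin.val_lt_last hil).ne
  · intro p hp
    split_ifs with h
    · obtain ⟨h0, hl, _⟩ := h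
      by_contra hne
      apply hp
      have hfac : ∀ i : Fin n, stepP (p i.castSucc) (p i.succ) ≠ 0 := by
        intro i hi
        exact hne (Finset.prod_eq_zero (Finset.mem_univ i) hi)
      have hub := path_le p h0 hne
      have key : ∀ j, j ≤ n → ∀ (hj : n - j < n + 1), p ⟨n - j, hj⟩ = n - j := by
        intro j
        induction j with
        | zero =>
          intro _ hj
          have : (⟨n - 0, hj⟩ : Fin (n + 1)) = Fin.last n := by
            apply Fin.ext; simp [Fin.last]
          rw [this, hl]
          omega
        | succ j ih =>
          intro hjn hj
          have hk : n - j - 1 < n := by omega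
          have h1 := stepP_le_succ (hfac ⟨n - j - 1, hk⟩)
          have h2 : (⟨n - j - 1, hk⟩ : Fin n).castSucc = ⟨n - (j+1), hj⟩ := by
            apply Fin.ext; simp; omega
          have h3 : (⟨n - j - 1, hk⟩ : Fin n).succ = ⟨n - j, by omega⟩ := by
            apply Fin.ext; simp; omega
          rw [h2, h3] at h1
          have hih := ih (by omega) (by omega)
          have hu := hub ⟨n - (j+1), hj⟩
          simp only at hu
          rw [hih] at h1
          omega
      funext i
      show p i = (i : ℕ)
      have hiv : (i : ℕ) ≤ n := by omega
      have := key (n - i.val) (by omega) (by omega)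
      have hidx : (⟨n - (n - i.val), by omega⟩ : Fin (n + 1)) = i := by
        apply Fin.ext; simp; omega
      rw [hidx] at this
      rw [this]
      omega
    · rfl

noncomputable def aSeq : ℕ → ℝ := fun i => if i = 0 then 0 else ((2:ℝ) ^ 2 ^ (i - 1))⁻¹

lemma aSeq_nonneg (i : ℕ) : 0 ≤ aSeq i := by
  unfold aSeq; split_ifs <;> positivity

lemma one_sub_aSeq_le (i : ℕ) : 1 - aSeq i ≤ stepP i (i + 1) := by
  rcases Nat.eq_zero_or_pos i with h | h
  · subst h; simp [aSeq, stepP]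
  · unfold stepP aSeq
    rw [if_neg (by omega), if_pos rfl, if_neg (by omega)]
    obtain ⟨j, rfl⟩ : ∃ j, i = j + 1 := ⟨i - 1, by omega⟩
    simp only [Nat.add_sub_cancel]
    have hA : (2:ℝ) ^ 2 ^ (j + 1) = (2 ^ 2 ^ j) * (2 ^ 2 ^ j) := by
      rw [← pow_add]; congr 1; omega
    set B : ℝ := 2 ^ 2 ^ j with hB
    have hBpos : 0 < B := by positivity
    rw [le_div_iff₀ (by positivity)]
    have hinv : B⁻¹ * B = 1 := inv_mul_cancel₀ hBpos.ne'
    rw [hA]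
    nlinarith [hBpos, hinv, sq_nonneg B]

lemma prod_lb (n : ℕ) :
    1 - ∑ i ∈ Finset.range n, aSeq i ≤ ∏ i ∈ Finset.range n, stepP i (i + 1) := by
  induction n with
  | zero => simp
  | succ n ih =>
    rw [Finset.sum_range_succ, Finset.prod_range_succ]
    have hs : 0 ≤ ∑ i ∈ Finset.range n, aSeq i :=
      Finset.sum_nonneg fun i _ => aSeq_nonneg i
    have hprod : 0 ≤ ∏ i ∈ Finset.range n, stepP i (i + 1) :=
      Finset.prod_nonneg fun i _ => stepP_nonneg i (i + 1)
    have hg : 0 ≤ stepP n (n + 1) := stepP_nonneg n (n + 1)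
    have hga := one_sub_aSeq_le n
    have ha := aSeq_nonneg n
    rcases le_or_gt (1 - ∑ i ∈ Finset.range n, aSeq i) 0 with hc | hc
    · nlinarith [mul_nonneg hprod hg]
    · nlinarith [mul_le_mul_of_nonneg_right ih hg,
        mul_le_mul_of_nonneg_left hga hc.le, mul_nonneg hs ha]

lemma two_pow_ge (n : ℕ) (hn : 3 ≤ n) : n + 1 ≤ 2 ^ (n - 1) := by
  induction n with
  | zero => omega
  | succ n ih =>
    rcases Nat.lt_or_ge n 3 with h | h
    · interval_cases n <;> simp_all
    · have := ih (by omega)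
      have h2 : 2 ^ (n + 1 - 1) = 2 * 2 ^ (n - 1) := by
        rw [← pow_succ']; congr 1; omega
      omega

lemma sum_aSeq_le (n : ℕ) : ∑ i ∈ Finset.range n, aSeq i ≤ 7 / 8 := by
  have key : ∀ m, 3 ≤ m → ∑ i ∈ Finset.range m, aSeq i ≤ 7 / 8 - (1/2 : ℝ) ^ m := by
    intro m hm
    induction m with
    | zero => omega
    | succ m ih =>
      rcases Nat.lt_or_ge m 3 with h | h
      · interval_cases m
        · omega
        · omega
        · norm_num [Finset.sum_range_succ, aSeq]
      · have hih := ih (by omega)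
        rw [Finset.sum_range_succ]
        have hb : aSeq m ≤ (1/2 : ℝ) ^ (m + 1) := by
          unfold aSeq
          rw [if_neg (by omega)]
          have h1 : (2:ℝ) ^ (m + 1) ≤ 2 ^ 2 ^ (m - 1) :=
            pow_le_pow_right₀ one_le_two (two_pow_ge m (by omega))
          have h2 : ((2:ℝ) ^ 2 ^ (m - 1))⁻¹ ≤ ((2:ℝ) ^ (m + 1))⁻¹ :=
            inv_anti₀ (by positivity) h1
          calc ((2:ℝ) ^ 2 ^ (m - 1))⁻¹ ≤ ((2:ℝ) ^ (m + 1))⁻¹ := h2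
            _ = (1/2 : ℝ) ^ (m + 1) := by rw [one_div, inv_pow]
        have : (1/2:ℝ) ^ (m + 1) + (1/2:ℝ) ^ (m+1) = (1/2:ℝ) ^ m := by ring
        linarith
  rcases Nat.lt_or_ge n 3 with h | h
  · interval_cases n <;> norm_num [Finset.sum_range_succ, aSeq]
  · have h1 := key n h
    have h2 : (0:ℝ) < (1/2:ℝ) ^ n := by positivity
    linarith

lemma prod_ge (n : ℕ) : (1/8 : ℝ) ≤ ∏ i ∈ Finset.range n, stepP i (i + 1) := by
  have := prod_lb n
  have := sum_aSeq_le n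
  linarith

/-- On `ℕ` with `2^{2^n}` parallel edges between `n` and `n+1`: the walk started at `0` moves
forward at every step with probability bounded below, hence `P_0(τ_n = n ∣ τ_n ≥ n) ≥ c > 0`
uniformly in `n` (stated multiplicatively); so non-concentration fails for hitting times. -/
theorem doubly_exponential_chain_concentrated_hitting :
    ∃ c : ℝ, 0 < c ∧
      (∀ n : ℕ, c ≤ ∏ i ∈ Finset.range n, stepP i (i + 1)) ∧
      (∀ n : ℕ, 1 ≤ n →
        c * (1 - ∑ s ∈ Finset.Ico 1 n, chainHitProb 0 n s) ≤ chainHitProb 0 n n) := by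
  refine ⟨1/8, by norm_num, prod_ge, ?_⟩
  intro n hn
  have hsum : ∑ s ∈ Finset.Ico 1 n, chainHitProb 0 n s = 0 := by
    apply Finset.sum_eq_zero
    intro s hs
    exact chainHitProb_lt (Finset.mem_Ico.mp hs).2
  rw [hsum, chainHitProb_diag n hn, sub_zero, mul_one]
  exact prod_ge n

end RW
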